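/- Let n, p be positive integers, let (Ω₀, μ) be a probability space, and let X : Ω₀ → Matrix (Fin n) (Fin p) ℝ be a measurable random matrix that is left-spherical, i.e. for every orthogonal matrix O ∈ O(n) the law of ω ↦ O * X(ω) equals the law of X. Assume that for μ-almost every ω the matrix X(ω) * X(ω)ᵀ is invertible, and let G(ω) := X(ω)ᵀ * (X(ω) * X(ω)ᵀ)⁻¹. Let Ω be an n×n real positive semidefinite symmetric matrix, and assume the functions ω ↦ trace(G(ω) * Ω * G(ω)ᵀ) and ω ↦ trace((X(ω) * X(ω)ᵀ)⁻¹) are integrable. Then ∫ trace(G(ω) * Ω * G(ω)ᵀ) dμ(ω) = (trace(Ω) / (n·p)) · ∫ trace((X(ω) * X(ω)ᵀ / p)⁻¹) dμ(ω). -/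

import Mathlib

open MeasureTheory Matrix

/-- Matrices inherit the product measurable structure of `m → n → α`. -/
instance matrixMeasurableSpace {m n α : Type*} [MeasurableSpace α] :
    MeasurableSpace (Matrix m n α) :=
  inferInstanceAs (MeasurableSpace (m → n → α))

instance matrixBorelSpace (k l : ℕ) : BorelSpace (Matrix (Fin k) (Fin l) ℝ) :=
  inferInstanceAs (BorelSpace (Fin k → Fin l → ℝ))

lemma aux_conj_inv {k : ℕ} (O B : Matrix (Fin k) (Fin k) ℝ) (h1 : Oᵀ * O = 1)
    (h2 : O * Oᵀ = 1) : (O * B * Oᵀ)⁻¹ = O * B⁻¹ * Oᵀ := by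
  have hO : O⁻¹ = Oᵀ := Matrix.inv_eq_right_inv h2
  have hOT : Oᵀ⁻¹ = O := Matrix.inv_eq_right_inv h1
  rw [Matrix.mul_inv_rev, Matrix.mul_inv_rev, hO, hOT, Matrix.mul_assoc]

lemma aux_measurable_inv (k : ℕ) :
    Measurable (fun A : Matrix (Fin k) (Fin k) ℝ => A⁻¹) := by
  have hdet : Measurable fun A : Matrix (Fin k) (Fin k) ℝ => A.det :=
    (continuous_id.matrix_det).measurable
  have hadj : Measurable fun A : Matrix (Fin k) (Fin k) ℝ => A.adjugate :=
    (continuous_id.matrix_adjugate).measurable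
  have heq : (fun A : Matrix (Fin k) (Fin k) ℝ => A⁻¹)
      = fun A => Ring.inverse A.det • A.adjugate := funext fun A => Matrix.inv_def A
  rw [heq]
  refine measurable_pi_lambda _ fun i => measurable_pi_lambda _ fun j => ?_
  simp only [Matrix.smul_apply, smul_eq_mul, Ring.inverse_eq_inv]
  exact (hdet.inv).mul ((measurable_pi_apply j).comp ((measurable_pi_apply i).comp hadj))

lemma aux_psd_abs_le {k : ℕ} {N : Matrix (Fin k) (Fin k) ℝ} (h : N.PosSemidef)
    (i j : Fin k) : |N i j| ≤ N.trace := by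
  have hsym : ∀ a b, N b a = N a b := fun a b => by
    have := congrFun (congrFun h.1 a) b
    simpa [Matrix.conjTranspose_apply] using this
  have hquad : ∀ x : Fin k → ℝ, 0 ≤ x ⬝ᵥ N *ᵥ x := fun x => by
    simpa using h.dotProduct_mulVec_nonneg x
  have hdiag : ∀ a, 0 ≤ N a a := fun a => by
    have := hquad (Pi.single a 1)
    simpa [-Matrix.mulVec_single, Matrix.mulVec_single_one, single_dotProduct] using this
  have htr : ∀ a, N a a ≤ N.trace := fun a => by
    have : N a a ≤ ∑ b, N b b :=
      Finset.single_le_sum (f := fun b => N b b) (fun b _ => hdiag b) (Finset.mem_univ a)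
    simpa [Matrix.trace, Matrix.diag] using this
  have htr0 : 0 ≤ N.trace := le_trans (hdiag i) (htr i)
  by_cases hij : i = j
  · subst hij
    rw [abs_of_nonneg (hdiag i)]; exact htr i
  · have hq : ∀ ε : ℝ, 0 ≤ N i i + ε * N i j + (ε * N i j + ε * (ε * N j j)) := by
      intro ε
      have := hquad (Pi.single i 1 + Pi.single j ε)
      simp only [Matrix.mulVec_add, dotProduct_add, add_dotProduct,
        Matrix.mulVec_single, single_dotProduct, Pi.add_apply, one_mul,
        Pi.smul_apply, op_smul_eq_mul, Matrix.col_apply, mul_one,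
        hsym i j] at this
      linarith [this]
    have h1 := hq 1
    have h2 := hq (-1)
    have hsum : N i i + N j j ≤ N.trace := by
      have : ∑ a ∈ ({i, j} : Finset (Fin k)), N a a ≤ ∑ a, N a a :=
        Finset.sum_le_sum_of_subset_of_nonneg (Finset.subset_univ _)
          (fun a _ _ => hdiag a)
      rw [Finset.sum_pair hij] at this
      simpa [Matrix.trace, Matrix.diag] using this
    rw [abs_le]
    constructor <;> linarith

/-- Theorem 3.3: the variance component of the estimation risk. Under left-sphericity of
the design matrix `X`, the expected variance of the ridgeless estimator factorizes as
`(trace Ω / (n p)) * E[trace ((XXᵀ/p)⁻¹)]`, where under a.e. full row rank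
`G = Xᵀ(XXᵀ)⁻¹` is the Moore–Penrose inverse of `X`. -/
theorem expected_variance_estimation_risk
    (n p : ℕ) (hn : 0 < n) (hp : 0 < p)
    {Ω₀ : Type*} [MeasurableSpace Ω₀] (μ : Measure Ω₀) [IsProbabilityMeasure μ]
    (X : Ω₀ → Matrix (Fin n) (Fin p) ℝ) (hX : Measurable X)
    (hsph : ∀ O : Matrix (Fin n) (Fin n) ℝ, Oᵀ * O = 1 → O * Oᵀ = 1 →
      Measure.map (fun ω => O * X ω) μ = Measure.map X μ)
    (hinv : ∀ᵐ ω ∂μ, IsUnit (X ω * (X ω)ᵀ))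
    (G : Ω₀ → Matrix (Fin p) (Fin n) ℝ)
    (hG : ∀ ω, G ω = (X ω)ᵀ * (X ω * (X ω)ᵀ)⁻¹)
    (Ω : Matrix (Fin n) (Fin n) ℝ) (hΩ : Ω.PosSemidef)
    (hint1 : Integrable (fun ω => (G ω * Ω * (G ω)ᵀ).trace) μ)
    (hint2 : Integrable (fun ω => ((X ω * (X ω)ᵀ)⁻¹).trace) μ) :
    ∫ ω, (G ω * Ω * (G ω)ᵀ).trace ∂μ
      = (Ω.trace / (n * p)) * ∫ ω, (((p : ℝ)⁻¹ • (X ω * (X ω)ᵀ))⁻¹).trace ∂μ := by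
  set B : Ω₀ → Matrix (Fin n) (Fin n) ℝ := fun ω => X ω * (X ω)ᵀ with hBdef
  set M : Ω₀ → Matrix (Fin n) (Fin n) ℝ := fun ω => (B ω)⁻¹ with hMdef
  -- measurability
  have hBmeas : Measurable B :=
    (continuous_id.matrix_mul continuous_id.matrix_transpose).measurable.comp hX
  have hMmeas : Measurable M := (aux_measurable_inv n).comp hBmeas
  -- positive semidefiniteness
  have hBpsd : ∀ ω, (B ω).PosSemidef := fun ω => by
    have := Matrix.posSemidef_self_mul_conjTranspose (X ω)
    rwa [Matrix.conjTranspose_eq_transpose_of_trivial] at this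
  have hMpsd : ∀ ω, (M ω).PosSemidef := fun ω => (hBpsd ω).inv
  have hMsym : ∀ ω, (M ω)ᵀ = M ω := fun ω => by
    have h := (hMpsd ω).1
    rwa [← Matrix.conjTranspose_eq_transpose_of_trivial]
  -- entrywise integrability
  have hMentry : ∀ i j, Measurable (fun ω => M ω i j) := fun i j =>
    (measurable_pi_apply j).comp ((measurable_pi_apply i).comp hMmeas)
  have hMint : ∀ i j, Integrable (fun ω => M ω i j) μ := fun i j => by
    refine hint2.mono' ((hMentry i j).aestronglyMeasurable) ?_
    filter_upwards with ω
    simpa [Real.norm_eq_abs] using aux_psd_abs_le (hMpsd ω) i j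
  -- the mean matrix
  set A : Matrix (Fin n) (Fin n) ℝ := Matrix.of (fun i j => ∫ ω, M ω i j ∂μ) with hAdef
  have hAentry : ∀ i j, A i j = ∫ ω, M ω i j ∂μ := fun i j => rfl
  -- invariance of A under orthogonal conjugation
  have hconj : ∀ O : Matrix (Fin n) (Fin n) ℝ, Oᵀ * O = 1 → O * Oᵀ = 1 →
      O * A * Oᵀ = A := by
    intro O h1 h2
    ext i j
    have hOX : Measurable (fun ω => O * X ω) :=
      (continuous_const.matrix_mul continuous_id).measurable.comp hX
    have hF : Measurable (fun Y : Matrix (Fin n) (Fin p) ℝ => ((Y * Yᵀ)⁻¹) i j) := by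
      refine (measurable_pi_apply j).comp ((measurable_pi_apply i).comp ?_)
      exact (aux_measurable_inv n).comp
        (continuous_id.matrix_mul continuous_id.matrix_transpose).measurable
    have step1 : ∫ ω, (O * M ω * Oᵀ) i j ∂μ = (O * A * Oᵀ) i j := by
      simp only [Matrix.mul_apply, Finset.sum_mul, Matrix.of_apply, hAdef]
      rw [integral_finset_sum _ (fun l _ => integrable_finset_sum _
        (fun k _ => ((hMint k l).const_mul _).mul_const _))]
      refine Finset.sum_congr rfl fun l _ => ?_
      rw [integral_finset_sum _ (fun k _ => ((hMint k l).const_mul _).mul_const _)]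
      refine Finset.sum_congr rfl fun k _ => ?_
      rw [integral_mul_const, integral_const_mul]
    have step2 : ∀ ω, (O * M ω * Oᵀ) i j = (((O * X ω) * (O * X ω)ᵀ)⁻¹) i j := by
      intro ω
      rw [Matrix.transpose_mul, show O * X ω * ((X ω)ᵀ * Oᵀ) = O * B ω * Oᵀ by
        simp only [hBdef, Matrix.mul_assoc], aux_conj_inv O (B ω) h1 h2]
    have step3 : ∫ ω, (((O * X ω) * (O * X ω)ᵀ)⁻¹) i j ∂μ = ∫ ω, M ω i j ∂μ := by
      rw [← integral_map hOX.aemeasurable hF.aestronglyMeasurable, hsph O h1 h2,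
        integral_map hX.aemeasurable hF.aestronglyMeasurable]
    rw [← step1]
    simp_rw [step2]
    rw [step3, hAentry]
  -- off-diagonal entries vanish
  have hoff : ∀ i j, i ≠ j → A i j = 0 := by
    intro i j hij
    set d : Fin n → ℝ := fun k => if k = i then -1 else 1 with hd
    have hdd : ∀ k, d k * d k = 1 := fun k => by
      by_cases h : k = i <;> simp [hd, h]
    have hD1 : (Matrix.diagonal d)ᵀ * Matrix.diagonal d = 1 := by
      rw [Matrix.diagonal_transpose, Matrix.diagonal_mul_diagonal]
      simp only [hdd]; exact Matrix.diagonal_one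
    have hD2 : Matrix.diagonal d * (Matrix.diagonal d)ᵀ = 1 := by
      rw [Matrix.diagonal_transpose, Matrix.diagonal_mul_diagonal]
      simp only [hdd]; exact Matrix.diagonal_one
    have := congrFun (congrFun (hconj (Matrix.diagonal d) hD1 hD2) i) j
    rw [Matrix.diagonal_transpose] at this
    rw [Matrix.mul_diagonal, Matrix.diagonal_mul] at this
    simp only [hd, if_pos rfl, if_neg (Ne.symm hij)] at this
    -- this : -1 * A i j * 1 = A i j
    linarith [this]
  -- diagonal entries are equal
  have hdiageq : ∀ i j : Fin n, A i i = A j j := by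
    intro i j
    set σ : Equiv.Perm (Fin n) := Equiv.swap i j with hσ
    set P : Matrix (Fin n) (Fin n) ℝ := σ.permMatrix ℝ with hP
    have hPT : Pᵀ = (σ.symm.toPEquiv.toMatrix : Matrix (Fin n) (Fin n) ℝ) := by
      rw [hP, ← PEquiv.toMatrix_symm, Equiv.toPEquiv_symm]
    have hP1 : Pᵀ * P = 1 := by
      rw [hPT, hP, ← PEquiv.toMatrix_trans, ← Equiv.toPEquiv_trans]
      simp
    have hP2 : P * Pᵀ = 1 := by
      rw [hPT, hP, ← PEquiv.toMatrix_trans, ← Equiv.toPEquiv_trans]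
      simp
    have hsub : P * A * Pᵀ = A.submatrix σ σ := by
      rw [hPT, Matrix.mul_assoc, PEquiv.mul_toMatrix_toPEquiv, hP,
        PEquiv.toMatrix_toPEquiv_mul]
      simp [Matrix.submatrix_submatrix]
    have := congrFun (congrFun (hconj P hP1 hP2) i) i
    rw [hsub] at this
    simpa [hσ, Equiv.swap_apply_left] using this.symm
  -- the common diagonal value
  set i0 : Fin n := ⟨0, hn⟩
  set c : ℝ := A i0 i0 with hc
  have hA : ∀ i j, A i j = if i = j then c else 0 := by
    intro i j
    by_cases h : i = j
    · subst h; simp [hc, hdiageq i i0]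
    · simp [h, hoff i j h]
  -- trace of A
  have htrA : ∫ ω, (M ω).trace ∂μ = n * c := by
    have : (fun ω => (M ω).trace) = fun ω => ∑ i, M ω i i := by
      ext ω; simp [Matrix.trace, Matrix.diag]
    rw [this, integral_finset_sum _ (fun i _ => hMint i i)]
    simp only [← hAentry, hA]
    simp [Finset.card_univ]
  -- LHS
  have hLHS : ∫ ω, (G ω * Ω * (G ω)ᵀ).trace ∂μ = ∫ ω, (M ω * Ω).trace ∂μ := by
    refine integral_congr_ae ?_
    filter_upwards [hinv] with ω hω
    have hdet : IsUnit (B ω).det := (Matrix.isUnit_iff_isUnit_det _).mp hω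
    have hMB : M ω * B ω = 1 := Matrix.nonsing_inv_mul _ hdet
    have hGT : (G ω)ᵀ = M ω * X ω := by
      rw [hG, Matrix.transpose_mul, Matrix.transpose_transpose, hMsym]
    rw [hGT, hG]
    calc ((X ω)ᵀ * M ω * Ω * (M ω * X ω)).trace
        = ((X ω)ᵀ * (M ω * Ω * (M ω * X ω))).trace := by
          simp only [Matrix.mul_assoc]
      _ = ((M ω * Ω * (M ω * X ω)) * (X ω)ᵀ).trace := Matrix.trace_mul_comm _ _
      _ = (M ω * Ω * (M ω * B ω)).trace := by
          simp only [hBdef, Matrix.mul_assoc]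
      _ = (M ω * Ω).trace := by rw [hMB, Matrix.mul_one]
  -- value of ∫ trace (M Ω)
  have hMΩ : ∫ ω, (M ω * Ω).trace ∂μ = c * Ω.trace := by
    have hexp : (fun ω => (M ω * Ω).trace) = fun ω => ∑ i, ∑ j, M ω i j * Ω j i := by
      ext ω; simp [Matrix.trace, Matrix.diag, Matrix.mul_apply]
    rw [hexp, integral_finset_sum _ (fun i _ =>
      integrable_finset_sum _ (fun j _ => (hMint i j).mul_const _))]
    have : ∀ i, ∫ ω, ∑ j, M ω i j * Ω j i ∂μ = ∑ j, A i j * Ω j i := by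
      intro i
      rw [integral_finset_sum _ (fun j _ => (hMint i j).mul_const _)]
      refine Finset.sum_congr rfl fun j _ => ?_
      rw [integral_mul_const, hAentry]
    simp_rw [this, hA]
    have h2 : ∀ i : Fin n, ∑ j, (if i = j then c else 0) * Ω j i = c * Ω i i := by
      intro i
      rw [Finset.sum_eq_single i]
      · simp
      · intro b _ hb; simp [Ne.symm hb]
      · simp
    simp_rw [h2]
    rw [← Finset.mul_sum]
    simp [Matrix.trace, Matrix.diag]
  -- RHS
  have hRHS : ∫ ω, (((p : ℝ)⁻¹ • B ω)⁻¹).trace ∂μ = p * ∫ ω, (M ω).trace ∂μ := by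
    rw [← integral_const_mul]
    refine integral_congr_ae ?_
    filter_upwards [hinv] with ω hω
    have hdet : IsUnit (B ω).det := (Matrix.isUnit_iff_isUnit_det _).mp hω
    have hp0 : (p : ℝ) ≠ 0 := Nat.cast_ne_zero.mpr hp.ne'
    have hsmul : ((p : ℝ)⁻¹ • B ω)⁻¹ = (p : ℝ) • M ω := by
      refine Matrix.inv_eq_right_inv ?_
      rw [Matrix.smul_mul, Matrix.mul_smul, smul_smul, inv_mul_cancel₀ hp0,
        one_smul, Matrix.mul_nonsing_inv _ hdet]
    rw [hsmul, Matrix.trace_smul, smul_eq_mul]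
  -- conclusion
  rw [hLHS, hMΩ, hRHS, htrA]
  have hn0 : (n : ℝ) ≠ 0 := Nat.cast_ne_zero.mpr hn.ne'
  have hp0 : (p : ℝ) ≠ 0 := Nat.cast_ne_zero.mpr hp.ne'
  field_simp
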